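/- The normalized coalescence manifold Ĉ_{4,2} is not a convex subset of ℝ³. -/

import Mathlib

/-!
For `k = 2` the map `χ_{4,2}` is linear in `(y₁, y₂)`: writing `X = x₁`,
`χ(X, A, B) = (A(1-X) + BX, (A(1-X³) + BX³)/3, (A(1-X⁶) + BX⁶)/6)`. Hence
`6c₄ - c₂ = (B - A)(X⁶ - X)`, and since `X⁶ ≠ X` on `(0,1)`, a point of `Ĉ_{4,2}` on the
plane `v₂ = 6v₄` (in Lean, `v 0 = 6 * v 2`) has `A = B`, which forces it to be
`(2/3, 2/9, 1/9)`. Two explicit points of `Ĉ_{4,2}` whose midpoint lies on that plane, but is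
a different point, show non-convexity.
-/

open Finset

/-- The map `χ_{4,k}` (coordinates `m = 2, 3, 4` with `C(m,2) = 1, 3, 6`), with the
convention `x_k = 0` and the empty product equal to `1`. -/
noncomputable def chi4 (k : ℕ) (x y : ℕ → ℝ) : Fin 3 → ℝ :=
  fun i =>
    (1 / ((i.val + 2).choose 2 : ℝ)) *
      ∑ j ∈ Finset.Icc 1 k,
        y j * (∏ l ∈ Finset.Icc 1 (j - 1), x l ^ (i.val + 2).choose 2) *
          (1 - (if j = k then (0 : ℝ) else x j) ^ (i.val + 2).choose 2)

/-- The coalescence manifold `C_{4,k} ⊆ ℝ³`: the image of `χ_{4,k}` over parameters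
`x ∈ (0,1)^{k-1}`, `y ∈ (0,∞)^k`. -/
def Coal4 (k : ℕ) : Set (Fin 3 → ℝ) :=
  { c | ∃ x y : ℕ → ℝ,
      (∀ j, 1 ≤ j → j ≤ k - 1 → 0 < x j ∧ x j < 1) ∧
      (∀ j, 1 ≤ j → j ≤ k → 0 < y j) ∧
      c = chi4 k x y }

/-- The normalized coalescence manifold `Ĉ_{4,k}`. -/
def CoalHat4 (k : ℕ) : Set (Fin 3 → ℝ) :=
  { v | ∃ c ∈ Coal4 k, v = (c 0 + c 1 + c 2)⁻¹ • c }

/-- The affine hyperplane `H = {v ∈ ℝ³ : v₁ + v₂ + v₃ = 1}`. -/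
def H3 : Set (Fin 3 → ℝ) := { v | v 0 + v 1 + v 2 = 1 }

/-- The interior of a set `S`, relative to the affine hyperplane `H3` equipped with its
subspace topology, viewed again as a subset of `ℝ³`. -/
def relIntH3 (S : Set (Fin 3 → ℝ)) : Set (Fin 3 → ℝ) :=
  (fun v : H3 => (v : Fin 3 → ℝ)) '' interior { v : H3 | (v : Fin 3 → ℝ) ∈ S }

noncomputable def chiTwo (X A B : ℝ) : Fin 3 → ℝ :=
  ![A * (1 - X) + B * X, (A * (1 - X ^ 3) + B * X ^ 3) / 3, (A * (1 - X ^ 6) + B * X ^ 6) / 6]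

lemma chi4_two_eq_chiTwo (x y : ℕ → ℝ) : chi4 2 x y = chiTwo (x 1) (y 1) (y 2) := by
  have hIcc : Finset.Icc 1 2 = ({1, 2} : Finset ℕ) := by decide
  ext i
  fin_cases i <;> simp [chi4, chiTwo, hIcc, Nat.choose] <;> ring

lemma mem_coal4_two_iff (c : Fin 3 → ℝ) :
    c ∈ Coal4 2 ↔ ∃ X A B : ℝ, 0 < X ∧ X < 1 ∧ 0 < A ∧ 0 < B ∧ c = chiTwo X A B := by
  constructor
  · rintro ⟨x, y, hx, hy, rfl⟩
    exact ⟨x 1, y 1, y 2, (hx 1 le_rfl le_rfl).1, (hx 1 le_rfl le_rfl).2,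
      hy 1 le_rfl one_le_two, hy 2 one_le_two le_rfl, chi4_two_eq_chiTwo x y⟩
  · rintro ⟨X, A, B, hX0, hX1, hA, hB, rfl⟩
    refine ⟨fun _ => X, fun j => if j = 1 then A else B, fun _ _ _ => ⟨hX0, hX1⟩,
      fun j _ _ => ?_, ?_⟩
    · dsimp only
      split_ifs <;> assumption
    · simp [chi4_two_eq_chiTwo]

lemma chiTwo_sum_pos {X A B : ℝ} (hX0 : 0 < X) (hX1 : X < 1) (hA : 0 < A) (hB : 0 < B) :
    0 < chiTwo X A B 0 + chiTwo X A B 1 + chiTwo X A B 2 := by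
  have h3 : X ^ 3 < 1 := pow_lt_one₀ hX0.le hX1 (by norm_num)
  have h6 : X ^ 6 < 1 := pow_lt_one₀ hX0.le hX1 (by norm_num)
  simp only [chiTwo, Matrix.cons_val]
  have := mul_pos hA (sub_pos.2 hX1)
  have := mul_pos hA (sub_pos.2 h3)
  have := mul_pos hA (sub_pos.2 h6)
  have := mul_pos hB hX0
  have := mul_pos hB (pow_pos hX0 3)
  have := mul_pos hB (pow_pos hX0 6)
  linarith

lemma chiTwo_eq_of_six_mul_eq {X A B : ℝ} (hX0 : 0 < X) (hX1 : X < 1)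
    (h : 6 * chiTwo X A B 2 = chiTwo X A B 0) : chiTwo X A B = A • ![1, 1 / 3, 1 / 6] := by
  have hX : X ^ 6 - X ≠ 0 := by
    have : X ^ 5 < 1 := pow_lt_one₀ hX0.le hX1 (by norm_num)
    nlinarith [mul_pos hX0 (sub_pos.2 this)]
  have hBA : B = A := by
    have : (B - A) * (X ^ 6 - X) = 0 := by
      simp only [chiTwo, Matrix.cons_val] at h
      linear_combination h
    linarith [(mul_eq_zero.1 this).resolve_right hX]
  subst hBA
  ext i
  fin_cases i <;> simp [chiTwo] <;> ring

lemma eq_of_mem_coalHat4_two_of_six_mul_eq {v : Fin 3 → ℝ} (hv : v ∈ CoalHat4 2)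
    (h : 6 * v 2 = v 0) : v = ![2 / 3, 2 / 9, 1 / 9] := by
  obtain ⟨c, hc, rfl⟩ := hv
  obtain ⟨X, A, B, hX0, hX1, hA, hB, rfl⟩ := (mem_coal4_two_iff c).1 hc
  have hS := chiTwo_sum_pos hX0 hX1 hA hB
  have h' : 6 * chiTwo X A B 2 = chiTwo X A B 0 := by
    simp only [Pi.smul_apply, smul_eq_mul] at h
    have := hS.ne'
    field_simp at h
    linarith
  rw [chiTwo_eq_of_six_mul_eq hX0 hX1 h'] at hS ⊢
  have := hA.ne'
  ext i
  fin_cases i <;> simp <;> field_simp <;> ring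

lemma mem_coalHat4_two_of_eq_smul_chiTwo {X A B : ℝ} (hX0 : 0 < X) (hX1 : X < 1) (hA : 0 < A)
    (hB : 0 < B) {v : Fin 3 → ℝ}
    (hv : v = (chiTwo X A B 0 + chiTwo X A B 1 + chiTwo X A B 2)⁻¹ • chiTwo X A B) :
    v ∈ CoalHat4 2 :=
  ⟨chiTwo X A B, (mem_coal4_two_iff _).2 ⟨X, A, B, hX0, hX1, hA, hB, rfl⟩, hv⟩

theorem coalHat_four_two_not_convex : ¬ Convex ℝ (CoalHat4 2) := by
  intro hconv
  have hp : (![1412 / 2355, 1844 / 7065, 197 / 1413] : Fin 3 → ℝ) ∈ CoalHat4 2 :=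
    mem_coalHat4_two_of_eq_smul_chiTwo (X := 1 / 2) (A := 497 / 288) (B := 209 / 288)
      (by norm_num) (by norm_num) (by norm_num) (by norm_num)
      (by ext i; fin_cases i <;> norm_num [chiTwo, Matrix.cons_val_two, Matrix.tail_cons])
  have hq : (![19232 / 25905, 13472 / 77715, 6547 / 77715] : Fin 3 → ℝ) ∈ CoalHat4 2 :=
    mem_coalHat4_two_of_eq_smul_chiTwo (X := 1 / 4) (A := 13088) (B := 37664)
      (by norm_num) (by norm_num) (by norm_num) (by norm_num)
      (by ext i; fin_cases i <;> norm_num [chiTwo, Matrix.cons_val_two, Matrix.tail_cons])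
  have hmid := eq_of_mem_coalHat4_two_of_six_mul_eq
    (hconv hp hq (a := 1 / 2) (b := 1 / 2) (by norm_num) (by norm_num) (by norm_num))
    (by norm_num [Matrix.cons_val_two, Matrix.tail_cons])
  have := congrFun hmid 0
  norm_num at this
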